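/- If attack in ASPIC+ is dlp-rebut, the knowledge base K is indirectly consistent, and the argument ordering is the simple ordering (A ⪯ B iff A is defeasible and B is strict), then the grounded extension E of the corresponding abstract argumentation framework is directly consistent: there is no formula φ such that both φ and its negation are conclusions of arguments in E. -/

import Mathlib

/-- Literals: atoms with a sign; `(a, true)` is the positive literal. -/
abbrev Lit (α : Type) := α × Bool

/-- Symmetric negation on literals. -/
def neg {α : Type} (l : Lit α) : Lit α := (l.1, !l.2)

/-- An inference rule with a list of antecedents and a consequent. -/
structure Rule (α : Type) where
  ant : List (Lit α)
  cons : Lit α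

/-- Closure of a set `S` of literals under a set `R` of rules:
`Cl R S l` holds iff `l` is derivable from `S` by chaining rules of `R`. -/
inductive Cl {α : Type} (R : Set (Rule α)) (S : Set (Lit α)) : Lit α → Prop
  | base {l : Lit α} : l ∈ S → Cl R S l
  | step {r : Rule α} : r ∈ R → (∀ a ∈ r.ant, Cl R S a) → Cl R S r.cons

/-- An ASPIC+ argumentation system plus knowledge base: knowledge base `K`,
strict rules `Rs` and defeasible rules `Rd`. -/
structure Theory (α : Type) where
  K : Set (Lit α)
  Rs : Set (Rule α)
  Rd : Set (Rule α)

/-- Untyped argument trees: a premise, or a rule applied to subargument trees. -/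
inductive Arg (α : Type) where
  | prem : Lit α → Arg α
  | node : Rule α → List (Arg α) → Arg α

/-- The conclusion of an argument. -/
def Arg.conc {α : Type} : Arg α → Lit α
  | .prem l => l
  | .node r _ => r.cons

/-- Well-formed ASPIC+ arguments over a theory: premises come from `K`, and
each applied rule is a strict or defeasible rule whose antecedents are the
conclusions of the immediate subarguments. -/
inductive WF {α : Type} (T : Theory α) : Arg α → Prop
  | prem {l : Lit α} : l ∈ T.K → WF T (.prem l)
  | node {r : Rule α} {args : List (Arg α)} :
      (r ∈ T.Rs ∨ r ∈ T.Rd) → args.map Arg.conc = r.ant →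
      (∀ a ∈ args, WF T a) → WF T (.node r args)

/-- `SubArg B A`: `B` is a subargument of `A`. -/
inductive SubArg {α : Type} : Arg α → Arg α → Prop
  | refl (A : Arg α) : SubArg A A
  | child {B A : Arg α} {r : Rule α} {args : List (Arg α)} :
      A ∈ args → SubArg B A → SubArg B (.node r args)

/-- `RuleIn r A`: rule `r` is used somewhere in argument `A`. -/
inductive RuleIn {α : Type} : Rule α → Arg α → Prop
  | top {r : Rule α} {args : List (Arg α)} : RuleIn r (.node r args)
  | child {r' : Rule α} {A : Arg α} {r : Rule α} {args : List (Arg α)} :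
      A ∈ args → RuleIn r' A → RuleIn r' (.node r args)

/-- `PremIn l A`: literal `l` is used as a premise of argument `A`. -/
inductive PremIn {α : Type} : Lit α → Arg α → Prop
  | prem {l : Lit α} : PremIn l (.prem l)
  | child {l : Lit α} {A : Arg α} {r : Rule α} {args : List (Arg α)} :
      A ∈ args → PremIn l A → PremIn l (.node r args)

/-- The set of defeasible rules used in an argument. -/
def DefRules {α : Type} (T : Theory α) (A : Arg α) : Set (Rule α) :=
  {r | RuleIn r A ∧ r ∈ T.Rd}

/-- An argument is defeasible if it uses some defeasible rule; otherwise strict. -/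
def Defeasible {α : Type} (T : Theory α) (A : Arg α) : Prop :=
  ∃ r, RuleIn r A ∧ r ∈ T.Rd

/-- The set of conclusions of all subarguments of `A`. -/
def ConcSub {α : Type} (A : Arg α) : Set (Lit α) :=
  {l | ∃ B, SubArg B A ∧ B.conc = l}

/-- A set of literals is indirectly consistent (relative to the strict rules of `T`). -/
def IndCons {α : Type} (T : Theory α) (S : Set (Lit α)) : Prop :=
  ¬ ∃ l, Cl T.Rs S l ∧ Cl T.Rs S (neg l)

/-- ASPIC+ (restricted) rebut: `A` rebuts `B` on a subargument with a
defeasible top rule whose consequent is the negation of `A`'s conclusion. -/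
def rebuts {α : Type} (T : Theory α) (A B : Arg α) : Prop :=
  ∃ (r : Rule α) (args : List (Arg α)),
    SubArg (.node r args) B ∧ r ∈ T.Rd ∧ A.conc = neg r.cons

/-- Unrestricted rebut: `A` u-rebuts `B` on a defeasible subargument. -/
def uRebuts {α : Type} (T : Theory α) (A B : Arg α) : Prop :=
  ∃ B', SubArg B' B ∧ Defeasible T B' ∧ A.conc = neg B'.conc

/-- dlp-rebut: `A` dlp-rebuts `B` iff for some subargument `B'` of `B`
the set `{Conc A, Conc B'} ∪ K` is indirectly inconsistent. -/
def dlpRebuts {α : Type} (T : Theory α) (A B : Arg α) : Prop :=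
  ∃ B', SubArg B' B ∧ ¬ IndCons T ({A.conc, B'.conc} ∪ T.K)

/-- Defeat under dlp-rebut with the simple argument ordering
(`A ≺ B` iff `A` is defeasible and `B` is strict): `A` defeats `B` iff `A`
dlp-rebuts `B` on some subargument `B'` and not `A ≺ B'`. -/
def dlpDefeats {α : Type} (T : Theory α) (A B : Arg α) : Prop :=
  ∃ B', SubArg B' B ∧ ¬ IndCons T ({A.conc, B'.conc} ∪ T.K) ∧
    ¬ (Defeasible T A ∧ ¬ Defeasible T B')

def defends {A : Type*} (att : A → A → Prop) (S : Set A) (a : A) : Prop :=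
  ∀ b, att b a → ∃ c ∈ S, att c b

def Fop {A : Type*} (att : A → A → Prop) (S : Set A) : Set A := {a | defends att S a}

/-! Two arguments with complementary conclusions make `{Conc A, Conc B} ∪ K` inconsistent
already before closing under the strict rules, and the simple ordering can block at most one
of the two directions of attack, so one of them defeats the other. The grounded extension lies
below the least fixpoint of the defense operator, which is conflict-free. -/

section Grounded

variable {A : Type*} (att : A → A → Prop)

def ConflictFree (S : Set A) : Prop :=
  ∀ a ∈ S, ∀ b ∈ S, ¬ att a b

theorem ConflictFree.mono {S S' : Set A} (h : ConflictFree att S') (hS : S ⊆ S') :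
    ConflictFree att S :=
  fun a ha b hb => h a (hS ha) b (hS hb)

theorem monotone_Fop : Monotone (Fop att) :=
  fun _ _ hS _ ha b hb => (ha b hb).imp fun _ hc => ⟨hS hc.1, hc.2⟩

def FopHom : Set A →o Set A := ⟨Fop att, monotone_Fop att⟩

theorem conflictFree_lfp_FopHom : ConflictFree att (OrderHom.lfp (FopHom att)) := by
  set G := OrderHom.lfp (FopHom att)
  have hG : Fop att G = G := OrderHom.map_lfp (FopHom att)
  let unattacked : Set A := {a | a ∈ G ∧ ∀ b ∈ G, ¬ att b a}
  have hpre : Fop att unattacked ⊆ unattacked := by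
    intro a ha
    refine ⟨hG ▸ monotone_Fop att (fun _ hx => hx.1) ha, fun b hb hba => ?_⟩
    obtain ⟨c, hc, hcb⟩ := ha b hba
    obtain ⟨d, hd, hdc⟩ := (hG.symm ▸ hb : b ∈ Fop att G) c hcb
    exact hc.2 d hd hdc
  have hGsub : G ⊆ unattacked := OrderHom.lfp_le (FopHom att) hpre
  exact fun a ha b hb hab => (hGsub hb).2 a ha hab

theorem conflictFree_of_subset_fixedPoints {E : Set A}
    (hleast : ∀ S, Fop att S = S → E ⊆ S) : ConflictFree att E :=
  (conflictFree_lfp_FopHom att).mono att (hleast _ (OrderHom.map_lfp (FopHom att)))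

end Grounded

section DlpRebut

variable {α : Type} {T : Theory α}

theorem not_indCons_of_mem {S : Set (Lit α)} {l : Lit α} (hl : l ∈ S) (hnl : neg l ∈ S) :
    ¬ IndCons T S :=
  fun hcons => hcons ⟨l, .base hl, .base hnl⟩

theorem dlpDefeats_or_of_conc_eq_neg {A B : Arg α} (h : B.conc = neg A.conc) :
    dlpDefeats T A B ∨ dlpDefeats T B A := by
  have hAB : ¬ IndCons T ({A.conc, B.conc} ∪ T.K) :=
    not_indCons_of_mem (l := A.conc) (by simp) (by simp [h])
  have hBA : ¬ IndCons T ({B.conc, A.conc} ∪ T.K) := Set.pair_comm A.conc B.conc ▸ hAB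
  by_cases hord : Defeasible T A ∧ ¬ Defeasible T B
  · exact .inr ⟨A, .refl A, hBA, fun hB => hord.2 hB.1⟩
  · exact .inl ⟨B, .refl B, hAB, hord⟩

end DlpRebut

theorem grounded_directly_consistent_general {α : Type} (T : Theory α)
    (E : Set {A : Arg α // WF T A})
    (hleast : ∀ S, Fop (fun A B => dlpDefeats T A.1 B.1) S = S → E ⊆ S) :
    ¬ ∃ φ : Lit α, (∃ A ∈ E, (A : {A : Arg α // WF T A}).1.conc = φ) ∧
      (∃ B ∈ E, (B : {A : Arg α // WF T A}).1.conc = neg φ) := by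
  rintro ⟨_, ⟨A, hA, rfl⟩, ⟨B, hB, hconc⟩⟩
  have hcf := conflictFree_of_subset_fixedPoints _ hleast
  rcases dlpDefeats_or_of_conc_eq_neg hconc with hAB | hBA
  · exact hcf A hA B hB hAB
  · exact hcf B hB A hA hBA

/-- with dlp-rebut as attack, `K` indirectly consistent and the
simple argument ordering, the grounded extension is directly consistent. -/
theorem grounded_directly_consistent {α : Type} (T : Theory α)
    (hK : IndCons T T.K)
    (E : Set {A : Arg α // WF T A})
    (hfix : Fop (fun A B => dlpDefeats T A.1 B.1) E = E)
    (hleast : ∀ S, Fop (fun A B => dlpDefeats T A.1 B.1) S = S → E ⊆ S) :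
    ¬ ∃ φ : Lit α, (∃ A ∈ E, (A : {A : Arg α // WF T A}).1.conc = φ) ∧
      (∃ B ∈ E, (B : {A : Arg α // WF T A}).1.conc = neg φ) :=
  grounded_directly_consistent_general T E hleast
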